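/- There exists a constant C > 0 such that for all ξ₁, ξ₁', ξ₂, τ ∈ ℝ with |ξ| ≥ 2|ξ₁'|, where ξ = (ξ₁, ξ₂) ∈ ℝ², and for each choice of sign ±, one has ⟨ξ⟩² ≤ C (⟨ξ₁'⟩ + 2⟨τ ± |(ξ₁ - ξ₁', ξ₂)|⟩ + 2⟨τ + |ξ|²⟩ · χ_B(τ, ξ)), where χ_B is the indicator function of the set B = { (τ, ξ) : (1/2)(|ξ|² - (3/2)|ξ|) ≤ |τ + |ξ|²| ≤ (3/2)(|ξ|² + (3/2)|ξ|) }. -/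
import Mathlib


/-- Japanese bracket of a real number: `⟨a⟩ = (1 + a²)^{1/2}`. -/
noncomputable def jb (a : ℝ) : ℝ := Real.sqrt (1 + a ^ 2)

/-- Euclidean norm of `(a, b) ∈ ℝ²`. -/
noncomputable def nrm (a b : ℝ) : ℝ := Real.sqrt (a ^ 2 + b ^ 2)

/-- Japanese bracket of `(a, b) ∈ ℝ²`: `⟨(a,b)⟩ = (1 + a² + b²)^{1/2}`. -/
noncomputable def jb2 (a b : ℝ) : ℝ := Real.sqrt (1 + a ^ 2 + b ^ 2)

lemma jb_nonneg (a : ℝ) : 0 ≤ jb a := Real.sqrt_nonneg _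

lemma one_le_jb (a : ℝ) : 1 ≤ jb a := by
  have h := Real.sqrt_le_sqrt (show (1:ℝ) ≤ 1 + a ^ 2 by nlinarith [sq_nonneg a])
  rwa [Real.sqrt_one] at h

lemma abs_le_jb (a : ℝ) : |a| ≤ jb a := by
  rw [jb, ← Real.sqrt_sq_eq_abs]
  exact Real.sqrt_le_sqrt (by nlinarith)

lemma nrm_nonneg (a b : ℝ) : 0 ≤ nrm a b := Real.sqrt_nonneg _

lemma nrm_sq (a b : ℝ) : (nrm a b) ^ 2 = a ^ 2 + b ^ 2 :=
  Real.sq_sqrt (by positivity)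

lemma jb2_sq (a b : ℝ) : (jb2 a b) ^ 2 = 1 + a ^ 2 + b ^ 2 :=
  Real.sq_sqrt (by positivity)

lemma nrm_tri (a b d : ℝ) : nrm a b ≤ nrm (a - d) b + |d| := by
  have h1 : |a - d| ≤ nrm (a - d) b := by
    rw [nrm, ← Real.sqrt_sq_eq_abs]
    exact Real.sqrt_le_sqrt (by nlinarith [sq_nonneg b])
  have h2 : (nrm (a - d) b) ^ 2 = (a - d) ^ 2 + b ^ 2 := nrm_sq _ _
  have h3 : a ^ 2 + b ^ 2 ≤ (nrm (a - d) b + |d|) ^ 2 := by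
    nlinarith [mul_le_mul_of_nonneg_left h1 (abs_nonneg d),
      abs_mul d (a - d), le_abs_self (d * (a - d)), abs_nonneg d,
      nrm_nonneg (a - d) b, sq_abs d]
  have h4 := Real.sqrt_le_sqrt h3
  rwa [Real.sqrt_sq (add_nonneg (nrm_nonneg _ _) (abs_nonneg _))] at h4

open Classical in
/-- There is `C > 0` such that whenever `|ξ| ≥ 2|ξ₁'|` (with `ξ = (ξ₁, ξ₂)`) and for
each choice of sign `ε = ±1`,
`⟨ξ⟩² ≤ C(⟨ξ₁'⟩ + 2⟨τ ± |(ξ₁ - ξ₁', ξ₂)|⟩ + 2⟨τ + |ξ|²⟩ χ_B(τ, ξ))`, where `B` is the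
set of `(τ, ξ)` with `(1/2)(|ξ|² - (3/2)|ξ|) ≤ |τ + |ξ|²| ≤ (3/2)(|ξ|² + (3/2)|ξ|)`. -/
theorem symbol_inequality_limit_case :
    ∃ C : ℝ, 0 < C ∧ ∀ ξ₁ ξ₁' ξ₂ τ ε : ℝ, ε = 1 ∨ ε = -1 →
      2 * |ξ₁'| ≤ nrm ξ₁ ξ₂ →
      (jb2 ξ₁ ξ₂) ^ 2
        ≤ C * (jb ξ₁' + 2 * jb (τ + ε * nrm (ξ₁ - ξ₁') ξ₂)
            + 2 * jb (τ + (nrm ξ₁ ξ₂) ^ 2) *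
              (if ((1 / 2) * ((nrm ξ₁ ξ₂) ^ 2 - (3 / 2) * nrm ξ₁ ξ₂)
                      ≤ |τ + (nrm ξ₁ ξ₂) ^ 2|
                  ∧ |τ + (nrm ξ₁ ξ₂) ^ 2|
                      ≤ (3 / 2) * ((nrm ξ₁ ξ₂) ^ 2 + (3 / 2) * nrm ξ₁ ξ₂))
                then (1 : ℝ) else 0)) := by
  refine ⟨10, by norm_num, ?_⟩
  intro ξ₁ ξ₁' ξ₂ τ ε hε hr
  set r := nrm ξ₁ ξ₂ with hrdef
  set s := nrm (ξ₁ - ξ₁') ξ₂ with hsdef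
  have hr0 : 0 ≤ r := nrm_nonneg _ _
  have hs0 : 0 ≤ s := nrm_nonneg _ _
  have hlhs : (jb2 ξ₁ ξ₂) ^ 2 = 1 + r ^ 2 := by
    rw [jb2_sq, hrdef, nrm_sq]; ring
  -- triangle inequalities
  have h1 : r ≤ s + |ξ₁'| := nrm_tri ξ₁ ξ₂ ξ₁'
  have h2 : s ≤ r + |ξ₁'| := by
    have := nrm_tri (ξ₁ - ξ₁') ξ₂ (-ξ₁')
    simpa [abs_neg] using this
  have habs : 0 ≤ |ξ₁'| := abs_nonneg _
  -- s bounds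
  have hsl : r / 2 ≤ s := by nlinarith
  have hsu : s ≤ 3 * r / 2 := by nlinarith
  have hεs1 : ε * s ≤ 3 * r / 2 := by
    rcases hε with h | h <;> simp [h] <;> nlinarith
  have hεs2 : -(3 * r / 2) ≤ ε * s := by
    rcases hε with h | h <;> simp [h] <;> nlinarith
  have hjb1 : (1:ℝ) ≤ jb ξ₁' := one_le_jb _
  have hjb2 : 0 ≤ jb (τ + ε * s) := jb_nonneg _
  have hjb3 : 0 ≤ jb (τ + r ^ 2) := jb_nonneg _
  set ind : ℝ := (if ((1 / 2) * (r ^ 2 - (3 / 2) * r) ≤ |τ + r ^ 2|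
                  ∧ |τ + r ^ 2| ≤ (3 / 2) * (r ^ 2 + (3 / 2) * r))
                then (1 : ℝ) else 0) with hind
  have hind0 : 0 ≤ ind := by rw [hind]; positivity
  rw [hlhs]
  rcases le_or_gt r 3 with hc | hc
  · -- small r : use jb ξ₁' ≥ 1
    nlinarith [mul_nonneg hjb3 hind0]
  · by_cases hB : (1 / 2) * (r ^ 2 - (3 / 2) * r) ≤ |τ + r ^ 2|
        ∧ |τ + r ^ 2| ≤ (3 / 2) * (r ^ 2 + (3 / 2) * r)
    · -- in B : use the indicator term
      have hind1 : ind = 1 := by rw [hind, if_pos hB]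
      have hA : |τ + r ^ 2| ≤ jb (τ + r ^ 2) := abs_le_jb _
      rw [hind1]
      nlinarith [hB.1]
    · -- not in B : use the jb (τ + εs) term
      have hA1 : τ + r ^ 2 ≤ |τ + r ^ 2| := le_abs_self _
      have hA2 : -|τ + r ^ 2| ≤ τ + r ^ 2 := neg_abs_le _
      have hT : |τ + ε * s| ≤ jb (τ + ε * s) := abs_le_jb _
      have hT1 : τ + ε * s ≤ |τ + ε * s| := le_abs_self _
      have hT2 : -(τ + ε * s) ≤ |τ + ε * s| := neg_le_abs _
      have hr3 : 3 * r ≤ r ^ 2 := by nlinarith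
      push_neg at hB
      have hkey : r ^ 2 / 4 ≤ jb (τ + ε * s) := by
        rcases lt_or_ge (|τ + r ^ 2|) ((1 / 2) * (r ^ 2 - (3 / 2) * r)) with h | h
        · -- |A| small : τ + εs is very negative
          linarith
        · have h' := hB h
          -- |A| large : τ + εs large in absolute value
          rcases abs_cases (τ + r ^ 2) with ⟨heq, _⟩ | ⟨heq, _⟩
          · linarith
          · linarith
      nlinarith [mul_nonneg hjb3 hind0]
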